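/- Let G be a group and H a subgroup of finite index, with Ver : G^ab → H^ab the transfer homomorphism. Let J be a normal subgroup of H containing the commutator subgroup H', and let J̃ = ⋂_{g ∈ G} gJg⁻¹ be the largest normal subgroup of G contained in J. Then J̃ is contained in the kernel of the composite homomorphism G → G^ab → H^ab → H/J. -/
import Mathlib


/-- The largest normal subgroup `J̃` of `G` contained in a normal subgroup `J` of `H`
(with `H' ⊆ J`, so the quotient `H/J` is abelian, represented here by a commutative
group `A` and a homomorphism `ϕ : H → A` with kernel `J`) is contained in the kernel
of the composite `G → G^ab → H^ab → H/J`, i.e. of the transfer map followed by `H → H/J`. -/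
theorem statement0 {G : Type*} [Group G] {H : Subgroup G} [H.FiniteIndex]
    {A : Type*} [CommGroup A] (ϕ : ↥H →* A) (J : Subgroup G) (hJH : J ≤ H)
    (hJnormal : ∀ h ∈ H, ∀ j ∈ J, h * j * h⁻¹ ∈ J)
    (hcommutator : ∀ a b : G, a ∈ H → b ∈ H → a * b * a⁻¹ * b⁻¹ ∈ J)
    (hker : ϕ.ker = J.subgroupOf H) :
    J.normalCore ≤ (ϕ.transfer).ker := by
  intro g hg
  classical
  letI := H.fintypeQuotientOfFiniteIndex
  rw [MonoidHom.mem_ker, MonoidHom.transfer_eq_prod_quotient_orbitRel_zpowers_quot]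
  apply Finset.prod_eq_one
  intro q _
  have hgn : ∀ n : ℕ, g ^ n ∈ J.normalCore := fun n => pow_mem hg n
  have h1 : q.out.out⁻¹ * g ^ Function.minimalPeriod (g • ·) q.out * q.out.out ∈ J := by
    have := hgn (Function.minimalPeriod (g • ·) q.out) q.out.out⁻¹
    simpa [mul_assoc] using this
  have : (⟨_, QuotientGroup.out_conj_pow_minimalPeriod_mem H g q.out⟩ : H) ∈ ϕ.ker := by
    rw [hker]; exact h1
  exact this
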